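/- arXiv:2206.03634 — 10 statements merged into one kernel-verified Lean document; each statement's English description precedes it below -/
import Mathlib

section
/- Let R_{ijkl} (i,j,k,l ∈ {1,2,3}) be real numbers. If there exists a real symmetric 3×3 matrix (α_{ij}) with R_{ijkl} = α_{ik}α_{jl} − α_{il}α_{jk} for all indices, then the determinant of the 3×3 matrix [[R_{1212}, R_{1213}, R_{1223}], [R_{1213}, R_{1313}, R_{1323}], [R_{1223}, R_{1323}, R_{2323}]] is nonnegative. -/
/-!
The entries of the matrix are the `2 × 2` minors of the symmetric matrix `α`. In dimension 3
a pair of indices is determined by the remaining index, so this matrix of minors is, up to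
signs and a reindexing, the adjugate of `α`. Hence its determinant is
`det (adj α) = (det α) ^ 2 ≥ 0`.
-/

open Matrix

section MinorMatrix

variable {R : Type*} [CommRing R] {n : ℕ}

def minorMatrix (A : Matrix (Fin (n + 1)) (Fin (n + 1)) R) : Matrix (Fin (n + 1)) (Fin (n + 1)) R :=
  of fun i j => (A.submatrix i.succAbove j.succAbove).det

theorem det_minorMatrix (A : Matrix (Fin (n + 1)) (Fin (n + 1)) R) :
    (minorMatrix A).det = A.det ^ n := by
  have hA : minorMatrix A = of fun i j : Fin (n + 1) =>
      (-1) ^ (i : ℕ) * of (fun i j : Fin (n + 1) => (-1) ^ (j : ℕ) * (adjugate A)ᵀ i j) i j := by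
    ext i j
    rw [of_apply, of_apply, transpose_apply, adjugate_fin_succ_eq_det_submatrix, ← mul_assoc,
      ← mul_assoc, ← pow_add, ← pow_add, Even.neg_one_pow ⟨i + j, by ring⟩, one_mul]
    rfl
  have hsign : (∏ i : Fin (n + 1), (-1 : R) ^ (i : ℕ)) * ∏ i : Fin (n + 1), (-1 : R) ^ (i : ℕ) = 1 := by
    rw [← Finset.prod_mul_distrib]
    exact Finset.prod_eq_one fun i _ => by rw [← pow_add, Even.neg_one_pow ⟨_, rfl⟩]
  rw [hA, det_mul_column, det_mul_row, ← mul_assoc, hsign, one_mul, det_transpose, det_adjugate,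
    Fintype.card_fin, Nat.add_sub_cancel]

end MinorMatrix

theorem weiss_thomas_obstruction (R : Fin 3 → Fin 3 → Fin 3 → Fin 3 → ℝ)
    (h : ∃ A : Matrix (Fin 3) (Fin 3) ℝ, A.IsSymm ∧
      ∀ i j k l, R i j k l = A i k * A j l - A i l * A j k) :
    0 ≤ Matrix.det !![R 0 1 0 1, R 0 1 0 2, R 0 1 1 2;
                      R 0 1 0 2, R 0 2 0 2, R 0 2 1 2;
                      R 0 1 1 2, R 0 2 1 2, R 1 2 1 2] := by
  obtain ⟨A, hA, hR⟩ := h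
  have h10 : A 1 0 = A 0 1 := hA.apply 0 1
  have h20 : A 2 0 = A 0 2 := hA.apply 0 2
  have h21 : A 2 1 = A 1 2 := hA.apply 1 2
  -- The pairs `01`, `02`, `12` are the complements of `2`, `1`, `0`, whence the reversal.
  have hminors : !![R 0 1 0 1, R 0 1 0 2, R 0 1 1 2;
                    R 0 1 0 2, R 0 2 0 2, R 0 2 1 2;
                    R 0 1 1 2, R 0 2 1 2, R 1 2 1 2] =
      (minorMatrix A).submatrix Fin.revPerm Fin.revPerm := by
    ext p q
    fin_cases p <;> fin_cases q <;>
      simp [minorMatrix, hR, det_fin_two, Fin.succAbove, h10, h20, h21] <;> ring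
  rw [hminors, det_submatrix_equiv_self, det_minorMatrix]
  positivity
end

section
/- Let c ∈ ℝ and let (α_{ij}) be a real symmetric 3×3 matrix. Define R_{ijkl} = c(δ_{ik}δ_{jl} − δ_{il}δ_{jk}) + α_{ik}α_{jl} − α_{il}α_{jk}. Then the determinant of the 3×3 matrix [[R_{1212}−c, R_{1213}, R_{1223}], [R_{1213}, R_{1313}−c, R_{1323}], [R_{1223}, R_{1323}, R_{2323}−c]] is nonnegative (indeed equal to (det A)²). -/
/-!
Up to the term `c(δ_{ik}δ_{jl} − δ_{il}δ_{jk})`, which contributes exactly `c` on the diagonal,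
`R_{ijkl}` is the `2 × 2` minor of `A` on rows `{i, j}` and columns `{k, l}`. So the matrix in
question is the second compound matrix of `A` (symmetry of `A` fills in its lower triangle). In
dimension three a pair of indices is the complement of a single index, so the second compound is
the transposed adjugate up to reversing the indices and a diagonal change of signs, and
`det (adj A) = (det A)²`.
-/

open Matrix

namespace Matrix

variable {α : Type*} [CommRing α]

/-- The index `p : Fin 3` encodes the pair `(pairFst p, pairSnd p)` of
`(0, 1), (0, 2), (1, 2)`, i.e. the basis vector `e_i ∧ e_j` of `Λ² α³`. -/
def pairFst : Fin 3 → Fin 3 := ![0, 0, 1]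

def pairSnd : Fin 3 → Fin 3 := ![1, 2, 2]

def secondCompound (A : Matrix (Fin 3) (Fin 3) α) : Matrix (Fin 3) (Fin 3) α :=
  of fun p q => A (pairFst p) (pairFst q) * A (pairSnd p) (pairSnd q)
    - A (pairFst p) (pairSnd q) * A (pairSnd p) (pairFst q)

/-- The pair `p` is the complement of the index `Fin.rev p`, so each `2 × 2` minor is a cofactor. -/
theorem secondCompound_eq_adjugate (A : Matrix (Fin 3) (Fin 3) α) :
    secondCompound A = diagonal ![1, -1, 1] *
      (adjugate A)ᵀ.submatrix Fin.revPerm Fin.revPerm * diagonal ![1, -1, 1] := by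
  ext p q
  fin_cases p <;> fin_cases q <;>
    simp [secondCompound, pairFst, pairSnd, adjugate_fin_three] <;> ring

theorem det_secondCompound (A : Matrix (Fin 3) (Fin 3) α) :
    (secondCompound A).det = A.det ^ 2 := by
  have hsigns : (diagonal ![(1 : α), -1, 1]).det = -1 := by
    simp [det_diagonal, Fin.prod_univ_three]
  rw [secondCompound_eq_adjugate, det_mul, det_mul, hsigns,
    det_submatrix_equiv_self Fin.revPerm, det_transpose, det_adjugate, Fintype.card_fin]
  ring

end Matrix

theorem space_form_obstruction (c : ℝ) (A : Matrix (Fin 3) (Fin 3) ℝ) (hA : A.IsSymm)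
    (R : Fin 3 → Fin 3 → Fin 3 → Fin 3 → ℝ)
    (hR : ∀ i j k l, R i j k l =
      c * ((if i = k then (1 : ℝ) else 0) * (if j = l then (1 : ℝ) else 0)
        - (if i = l then (1 : ℝ) else 0) * (if j = k then (1 : ℝ) else 0))
      + A i k * A j l - A i l * A j k) :
    Matrix.det !![R 0 1 0 1 - c, R 0 1 0 2, R 0 1 1 2;
                  R 0 1 0 2, R 0 2 0 2 - c, R 0 2 1 2;
                  R 0 1 1 2, R 0 2 1 2, R 1 2 1 2 - c] = A.det ^ 2 ∧
    0 ≤ Matrix.det !![R 0 1 0 1 - c, R 0 1 0 2, R 0 1 1 2;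
                      R 0 1 0 2, R 0 2 0 2 - c, R 0 2 1 2;
                      R 0 1 1 2, R 0 2 1 2, R 1 2 1 2 - c] := by
  have hcompound : !![R 0 1 0 1 - c, R 0 1 0 2, R 0 1 1 2;
                      R 0 1 0 2, R 0 2 0 2 - c, R 0 2 1 2;
                      R 0 1 1 2, R 0 2 1 2, R 1 2 1 2 - c] = secondCompound A := by
    ext p q
    fin_cases p <;> fin_cases q <;>
      simp [hR, secondCompound, pairFst, pairSnd, hA.apply 1 0, hA.apply 2 0, hA.apply 2 1] <;>
      ring
  rw [hcompound, det_secondCompound]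
  exact ⟨rfl, sq_nonneg _⟩
end

section
/- Let A, B be real symmetric 3×3 matrices with det A ≠ 0. If α_{ik}α_{jl} − α_{il}α_{jk} = β_{ik}β_{jl} − β_{il}β_{jk} for all i,j,k,l ∈ {1,2,3} (where α, β are the entries of A, B), then B = A or B = −A. -/
/-!
The hypothesis says that `A` and `B` have the same `2 × 2` minors, and in dimension 3 these
are exactly the entries of the adjugate, so `adj A = adj B`. Taking determinants gives
`(det A)² = (det B)²`, and applying `adj` once more gives `det A • A = det B • B`; since
`det A ≠ 0`, the two signs of `det B = ± det A` yield `B = A` and `B = -A`.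
-/

open Matrix

theorem adjugate_fin_three_eq_of_minors_eq {R : Type*} [CommRing R]
    {A B : Matrix (Fin 3) (Fin 3) R}
    (h : ∀ i j k l, A i k * A j l - A i l * A j k = B i k * B j l - B i l * B j k) :
    adjugate A = adjugate B := by
  simp only [adjugate_fin_three, neg_add_eq_sub, h 1 2 1 2, h 0 2 2 1, h 0 1 1 2, h 1 2 2 0,
    h 0 2 0 2, h 0 1 2 0, h 1 2 0 1, h 0 2 1 0, h 0 1 0 1]

theorem eq_or_eq_neg_of_adjugate_eq {K : Type*} [Field K] {A B : Matrix (Fin 3) (Fin 3) K}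
    (hA : A.det ≠ 0) (hAB : adjugate A = adjugate B) : B = A ∨ B = -A := by
  have hdet_sq : A.det ^ 2 = B.det ^ 2 := by
    simpa [det_adjugate] using congrArg det hAB
  have hsmul : A.det • A = B.det • B := by
    simpa using
      (adjugate_adjugate' A).symm.trans ((congrArg adjugate hAB).trans (adjugate_adjugate' B))
  rcases sq_eq_sq_iff_eq_or_eq_neg.mp hdet_sq with hdet | hdet
  · left
    rw [← hdet] at hsmul
    exact (smul_right_injective _ hA hsmul).symm
  · right
    rw [← neg_eq_iff_eq_neg.mpr hdet, neg_smul, ← smul_neg] at hsmul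
    rw [smul_right_injective _ hA hsmul, neg_neg]

theorem gauss_solution_unique_up_to_sign_general (A B : Matrix (Fin 3) (Fin 3) ℝ)
    (hdet : A.det ≠ 0)
    (h : ∀ i j k l, A i k * A j l - A i l * A j k = B i k * B j l - B i l * B j k) :
    B = A ∨ B = -A :=
  eq_or_eq_neg_of_adjugate_eq hdet (adjugate_fin_three_eq_of_minors_eq h)

theorem gauss_solution_unique_up_to_sign (A B : Matrix (Fin 3) (Fin 3) ℝ)
    (hA : A.IsSymm) (hB : B.IsSymm) (hdet : A.det ≠ 0)
    (h : ∀ i j k l, A i k * A j l - A i l * A j k = B i k * B j l - B i l * B j k) :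
    B = A ∨ B = -A :=
  gauss_solution_unique_up_to_sign_general A B hdet h
end

section
/- Let (α_{ij}) be a real symmetric 3×3 matrix with det A ≠ 0. Then for every family of real numbers T_{ijkl} (i,j,k,l ∈ {1,2,3}) satisfying T_{ijkl} = −T_{jikl} = −T_{ijlk} = T_{klij}, there exists a unique real symmetric 3×3 matrix (γ_{ij}) such that γ_{ik}α_{jl} + α_{ik}γ_{jl} − γ_{il}α_{jk} − α_{il}γ_{jk} = T_{ijkl} for all i,j,k,l. -/
/-!
Contracting `G ⊙ A` (the Kulkarni–Nomizu product) with `A⁻¹` gives `(n - 2) G + tr(A⁻¹ G) A`;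
tracing once more against `A⁻¹` shows that `tr(A⁻¹ G) = 0`, hence `G = 0` whenever `G ⊙ A = 0`
and `n ≥ 3`. In dimension 3 a tensor with the symmetries of a curvature tensor is determined by
its six components `T₀₁₀₁, T₀₁₀₂, T₀₁₁₂, T₀₂₀₂, T₀₂₁₂, T₁₂₁₂`, so `G ↦ G ⊙ A` becomes an injective
linear endomorphism of `K⁶` once symmetric matrices are parametrized by their upper triangle, and is
therefore onto.
-/

open Matrix

section CommRing

variable {n R : Type*} [CommRing R]

def kulkarniNomizu (A : Matrix n n R) : Matrix n n R →ₗ[R] (n → n → n → n → R) where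
  toFun G i j k l := G i k * A j l + A i k * G j l - G i l * A j k - A i l * G j k
  map_add' G G' := by ext; simp only [Matrix.add_apply, Pi.add_apply]; ring
  map_smul' c G := by
    ext; simp only [Matrix.smul_apply, smul_eq_mul, RingHom.id_apply, Pi.smul_apply]; ring

theorem kulkarniNomizu_apply (A G : Matrix n n R) (i j k l : n) :
    kulkarniNomizu A G i j k l = G i k * A j l + A i k * G j l - G i l * A j k - A i l * G j k :=
  rfl

variable (n R) in
/-- The first Bianchi identity is not imposed; in dimension 3 it follows from the others. -/
def curvatureLike : Submodule R (n → n → n → n → R) where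
  carrier := {T | (∀ i j k l, T i j k l = -T j i k l) ∧ (∀ i j k l, T i j k l = -T i j l k) ∧
    ∀ i j k l, T i j k l = T k l i j}
  add_mem' := by
    rintro T T' ⟨h1, h2, h3⟩ ⟨h1', h2', h3'⟩
    refine ⟨fun i j k l => ?_, fun i j k l => ?_, fun i j k l => ?_⟩ <;> simp only [Pi.add_apply]
    · rw [h1 i j k l, h1' i j k l, neg_add]
    · rw [h2 i j k l, h2' i j k l, neg_add]
    · rw [h3 i j k l, h3' i j k l]
  zero_mem' := by simp
  smul_mem' := by
    rintro c T ⟨h1, h2, h3⟩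
    refine ⟨fun i j k l => ?_, fun i j k l => ?_, fun i j k l => ?_⟩ <;>
      simp only [Pi.smul_apply, smul_eq_mul]
    · rw [h1 i j k l, mul_neg]
    · rw [h2 i j k l, mul_neg]
    · rw [h3 i j k l]

theorem kulkarniNomizu_mem_curvatureLike {A G : Matrix n n R} (hA : A.IsSymm) (hG : G.IsSymm) :
    kulkarniNomizu A G ∈ curvatureLike n R := by
  refine ⟨fun i j k l => ?_, fun i j k l => ?_, fun i j k l => ?_⟩ <;>
    simp only [kulkarniNomizu_apply]
  · ring
  · ring
  · rw [hG.apply i k, hA.apply j l, hA.apply i k, hG.apply j l, hG.apply j k, hA.apply i l,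
      hA.apply j k, hG.apply i l]
    ring

variable [Fintype n]

def ricciContraction (B : Matrix n n R) (T : n → n → n → n → R) : Matrix n n R :=
  of fun i k => ∑ j, ∑ l, B j l * T i j k l

theorem ricciContraction_kulkarniNomizu (A B G : Matrix n n R) :
    ricciContraction B (kulkarniNomizu A G) =
      (B * Aᵀ).trace • G + (B * Gᵀ).trace • A - G * (Bᵀ * A) - A * Bᵀ * G := by
  ext i k
  simp only [ricciContraction, kulkarniNomizu_apply, of_apply, mul_sub, mul_add,
    Finset.sum_add_distrib, Finset.sum_sub_distrib, Matrix.add_apply, Matrix.sub_apply,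
    Matrix.smul_apply, smul_eq_mul, trace, diag, mul_apply, transpose_apply, Finset.sum_mul,
    Finset.mul_sum]
  have hswap : ∑ j, ∑ l, B j l * (G i l * A j k) = ∑ l, ∑ j, G i l * (B j l * A j k) := by
    rw [Finset.sum_comm]; simp only [mul_left_comm]
  rw [hswap]
  congr 1; congr 1; congr 1
  all_goals exact Finset.sum_congr rfl fun _ _ => Finset.sum_congr rfl fun _ _ => by ring

end CommRing

section Field

variable {n K : Type*} [Fintype n] [DecidableEq n] [Field K]

theorem ricciContraction_inv_kulkarniNomizu {A G : Matrix n n K} (hA : A.IsSymm)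
    (hdet : A.det ≠ 0) (hG : G.IsSymm) :
    ricciContraction A⁻¹ (kulkarniNomizu A G) =
      ((Fintype.card n : K) - 2) • G + (A⁻¹ * G).trace • A := by
  have hunit : IsUnit A.det := hdet.isUnit
  rw [ricciContraction_kulkarniNomizu, hA.eq, hG.eq, transpose_nonsing_inv, hA.eq,
    nonsing_inv_mul A hunit, mul_nonsing_inv A hunit, trace_one, Matrix.mul_one, Matrix.one_mul]
  module

theorem eq_zero_of_kulkarniNomizu_eq_zero [CharZero K] {A G : Matrix n n K} (hA : A.IsSymm)
    (hdet : A.det ≠ 0) (hn : 3 ≤ Fintype.card n) (hG : G.IsSymm) (h : kulkarniNomizu A G = 0) :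
    G = 0 := by
  set c : K := (Fintype.card n : K)
  set t := (A⁻¹ * G).trace
  have hricci : (c - 2) • G + t • A = 0 := by
    rw [← ricciContraction_inv_kulkarniNomizu hA hdet hG, h]
    ext; simp [ricciContraction]
  have ht : (2 * c - 2) * t = 0 := by
    have := congrArg (fun M => (A⁻¹ * M).trace) hricci
    simp only [Matrix.mul_add, Matrix.mul_smul, trace_add, trace_smul, Matrix.mul_zero, trace_zero,
      nonsing_inv_mul A hdet.isUnit, trace_one, smul_eq_mul] at this
    linear_combination this
  obtain ⟨m, hm⟩ := Nat.exists_eq_add_of_le' hn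
  have hc2 : c - 2 = ((m + 1 : ℕ) : K) := by simp only [c, hm]; push_cast; ring
  have h2c2 : 2 * c - 2 = ((2 * m + 4 : ℕ) : K) := by simp only [c, hm]; push_cast; ring
  rw [h2c2] at ht
  rw [hc2, (mul_eq_zero.mp ht).resolve_left (Nat.cast_ne_zero.mpr (by omega)), zero_smul,
    add_zero] at hricci
  exact (smul_eq_zero.mp hricci).resolve_left (Nat.cast_ne_zero.mpr (by omega))

theorem kulkarniNomizu_injOn [CharZero K] {A : Matrix n n K} (hA : A.IsSymm) (hdet : A.det ≠ 0)
    (hn : 3 ≤ Fintype.card n) : Set.InjOn (kulkarniNomizu A) {G | G.IsSymm} := fun G hG G' hG' h =>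
  sub_eq_zero.mp <| eq_zero_of_kulkarniNomizu_eq_zero hA hdet hn (hG.sub hG') <| by
    rw [map_sub, h, sub_self]

end Field

section Dimension3

variable {K : Type*} [Field K]

def curvatureComponents : (Fin 3 → Fin 3 → Fin 3 → Fin 3 → K) →ₗ[K] (Fin 6 → K) where
  toFun T := ![T 0 1 0 1, T 0 1 0 2, T 0 1 1 2, T 0 2 0 2, T 0 2 1 2, T 1 2 1 2]
  map_add' T T' := by ext m; fin_cases m <;> rfl
  map_smul' c T := by ext m; fin_cases m <;> rfl

theorem eq_zero_of_curvatureComponents_eq_zero [CharZero K]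
    {T : Fin 3 → Fin 3 → Fin 3 → Fin 3 → K} (hT : T ∈ curvatureLike (Fin 3) K)
    (h : curvatureComponents T = 0) : T = 0 := by
  obtain ⟨h1, h2, h3⟩ := hT
  -- These rules rewrite every component to `±` one with `i < j`, `k < l` and `(i, j) ≤ (k, l)`.
  -- The pair swaps carry a sign so that `simp` does not discard them as permutation lemmas.
  have antisymm_left : ∀ i j k l, j < i → T i j k l = -T j i k l := fun i j k l _ => h1 i j k l
  have antisymm_right : ∀ i j k l, l < k → T i j k l = -T i j l k := fun i j k l _ => h2 i j k l
  have swap_pairs : ∀ i j k l, k < i → T i j k l = -T k l j i := fun i j k l _ => by rw [h3, h2]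
  have swap_pairs' : ∀ i j l, l < j → T i j i l = -T i l j i := fun i j l _ => by rw [h3, h2]
  have diag_left : ∀ i k l, T i i k l = 0 := fun i k l => self_eq_neg.mp (h1 i i k l)
  have diag_right : ∀ i j k, T i j k k = 0 := fun i j k => self_eq_neg.mp (h2 i j k k)
  simp only [curvatureComponents, LinearMap.coe_mk, AddHom.coe_mk, funext_iff, Fin.forall_fin_succ,
    IsEmpty.forall_iff, Matrix.cons_val_succ, Matrix.cons_val_zero, Pi.zero_apply, and_true] at h
  obtain ⟨h0101, h0102, h0112, h0202, h0212, h1212⟩ := h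
  ext i j k l
  fin_cases i <;> fin_cases j <;> fin_cases k <;> fin_cases l <;>
    simp [antisymm_left, antisymm_right, swap_pairs, swap_pairs', diag_left, diag_right, h0101,
      h0102, h0112, h0202, h0212, h1212]

def symmOfUpperTriangle : (Fin 6 → K) →ₗ[K] Matrix (Fin 3) (Fin 3) K where
  toFun x := !![x 0, x 1, x 2; x 1, x 3, x 4; x 2, x 4, x 5]
  map_add' x y := by ext i j; fin_cases i <;> fin_cases j <;> rfl
  map_smul' c x := by ext i j; fin_cases i <;> fin_cases j <;> rfl

theorem symmOfUpperTriangle_isSymm (x : Fin 6 → K) : (symmOfUpperTriangle x).IsSymm := by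
  ext i j; fin_cases i <;> fin_cases j <;> rfl

theorem symmOfUpperTriangle_injective : Function.Injective (symmOfUpperTriangle (K := K)) :=
  fun x y h => by
    ext m
    fin_cases m
    exacts [congr_fun₂ h 0 0, congr_fun₂ h 0 1, congr_fun₂ h 0 2, congr_fun₂ h 1 1,
      congr_fun₂ h 1 2, congr_fun₂ h 2 2]

theorem exists_isSymm_kulkarniNomizu_eq [CharZero K] {A : Matrix (Fin 3) (Fin 3) K}
    (hA : A.IsSymm) (hdet : A.det ≠ 0) {T : Fin 3 → Fin 3 → Fin 3 → Fin 3 → K}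
    (hT : T ∈ curvatureLike (Fin 3) K) : ∃ G, G.IsSymm ∧ kulkarniNomizu A G = T := by
  set F := curvatureComponents ∘ₗ kulkarniNomizu A ∘ₗ symmOfUpperTriangle
  have hF : Function.Injective F := by
    refine (injective_iff_map_eq_zero F).mpr fun x hx => symmOfUpperTriangle_injective ?_
    have hKN := eq_zero_of_curvatureComponents_eq_zero
      (kulkarniNomizu_mem_curvatureLike hA (symmOfUpperTriangle_isSymm x)) hx
    rw [eq_zero_of_kulkarniNomizu_eq_zero hA hdet (by simp) (symmOfUpperTriangle_isSymm x) hKN,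
      map_zero]
  obtain ⟨x, hx⟩ := LinearMap.injective_iff_surjective.mp hF (curvatureComponents T)
  refine ⟨symmOfUpperTriangle x, symmOfUpperTriangle_isSymm x, sub_eq_zero.mp ?_⟩
  refine eq_zero_of_curvatureComponents_eq_zero
    (sub_mem (kulkarniNomizu_mem_curvatureLike hA (symmOfUpperTriangle_isSymm x)) hT) ?_
  rw [map_sub, ← hx, sub_eq_zero]
  rfl

end Dimension3

theorem linearized_gauss_bijective (A : Matrix (Fin 3) (Fin 3) ℝ) (hA : A.IsSymm)
    (hdet : A.det ≠ 0)
    (T : Fin 3 → Fin 3 → Fin 3 → Fin 3 → ℝ)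
    (hT1 : ∀ i j k l, T i j k l = -T j i k l)
    (hT2 : ∀ i j k l, T i j k l = -T i j l k)
    (hT3 : ∀ i j k l, T i j k l = T k l i j) :
    ∃! G : Matrix (Fin 3) (Fin 3) ℝ, G.IsSymm ∧
      ∀ i j k l, G i k * A j l + A i k * G j l - G i l * A j k - A i l * G j k
        = T i j k l := by
  obtain ⟨G, hG, rfl⟩ := exists_isSymm_kulkarniNomizu_eq hA hdet ⟨hT1, hT2, hT3⟩
  refine ⟨G, ⟨hG, fun i j k l => rfl⟩, fun G' ⟨hG', hG'T⟩ => ?_⟩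
  exact kulkarniNomizu_injOn hA hdet (by simp) hG' hG (by ext i j k l; exact hG'T i j k l)
end

section
/- Let (α_{ij}) be a real symmetric 3×3 matrix and let (β_{ijk}) be a totally symmetric 3-tensor on ℝ³. Define R_{ijkl} = α_{ik}α_{jl} − α_{il}α_{jk} and S_{ijklm} = β_{ikm}α_{jl} + α_{ik}β_{jlm} − β_{ilm}α_{jk} − α_{il}β_{jkm}. Then r₁ := (R_{1213}R_{2323} − R_{1223}R_{1323})S_{12121} − (R_{1213}R_{1323} − R_{1223}R_{1313})S_{12122} − (R_{1212}R_{2323} − R_{1223}²)S_{12131} + (R_{1212}R_{1323} − R_{1213}R_{1223})S_{12132} + (R_{1212}R_{1323} − R_{1213}R_{1223})S_{12231} − (R_{1212}R_{1313} − R_{1213}²)S_{12232} = 0. -/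
/-!
Read `R` as the matrix of `2 × 2` minors of `A` and `S` as its derivative along `∂ₘ A i k = β i k m`.
The `2 × 2` minors of the matrix of minors of a `3 × 3` matrix are `± det A` times entries of `A`
(Jacobi), so for symmetric `A` the quantity `r₁` is `det A` times a combination of derivatives of
cofactors.
Differentiating the relations `∑ c, A r c * adj A c 2 = 0` (`r = 0, 1`) turns that combination
into `∑ c, adj A c 2 * (β 0 c 1 - β 1 c 0)`, which vanishes by the Codazzi symmetry of `β`.
-/

open Matrix

namespace Rivertz

def gaussTensor (A : Matrix (Fin 3) (Fin 3) ℝ) (i j k l : Fin 3) : ℝ :=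
  A i k * A j l - A i l * A j k

def derivedGaussTensor (A : Matrix (Fin 3) (Fin 3) ℝ) (β : Fin 3 → Fin 3 → Fin 3 → ℝ)
    (i j k l m : Fin 3) : ℝ :=
  β i k m * A j l + A i k * β j l m - β i l m * A j k - A i l * β j k m

/-- Indices `0, 1, 2` stand for the paper's `1, 2, 3`. -/
def r₁ (R : Fin 3 → Fin 3 → Fin 3 → Fin 3 → ℝ) (S : Fin 3 → Fin 3 → Fin 3 → Fin 3 → Fin 3 → ℝ) :
    ℝ :=
  (R 0 1 0 2 * R 1 2 1 2 - R 0 1 1 2 * R 0 2 1 2) * S 0 1 0 1 0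
    - (R 0 1 0 2 * R 0 2 1 2 - R 0 1 1 2 * R 0 2 0 2) * S 0 1 0 1 1
    - (R 0 1 0 1 * R 1 2 1 2 - R 0 1 1 2 ^ 2) * S 0 1 0 2 0
    + (R 0 1 0 1 * R 0 2 1 2 - R 0 1 0 2 * R 0 1 1 2) * S 0 1 0 2 1
    + (R 0 1 0 1 * R 0 2 1 2 - R 0 1 0 2 * R 0 1 1 2) * S 0 1 1 2 0
    - (R 0 1 0 1 * R 0 2 0 2 - R 0 1 0 2 ^ 2) * S 0 1 1 2 1

theorem r₁_gaussTensor_eq_det_mul {A : Matrix (Fin 3) (Fin 3) ℝ} (hA : A.IsSymm)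
    (β : Fin 3 → Fin 3 → Fin 3 → ℝ) :
    r₁ (gaussTensor A) (derivedGaussTensor A β) =
      A.det * ∑ c, adjugate A c 2 * (β 0 c 1 - β 1 c 0) := by
  have h10 : A 1 0 = A 0 1 := hA.apply 0 1
  have h20 : A 2 0 = A 0 2 := hA.apply 0 2
  have h21 : A 2 1 = A 1 2 := hA.apply 1 2
  simp only [r₁, gaussTensor, derivedGaussTensor, det_fin_three, adjugate_fin_three,
    Fin.sum_univ_three, of_apply, cons_val', cons_val, empty_val', cons_val_fin_one,
    h10, h20, h21]
  ring

end Rivertz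

theorem rivertz_r1_vanishes (A : Matrix (Fin 3) (Fin 3) ℝ) (hA : A.IsSymm)
    (β : Fin 3 → Fin 3 → Fin 3 → ℝ)
    (hβ1 : ∀ i j k, β i j k = β j i k)
    (hβ2 : ∀ i j k, β i j k = β i k j)
    (R : Fin 3 → Fin 3 → Fin 3 → Fin 3 → ℝ)
    (hR : ∀ i j k l, R i j k l = A i k * A j l - A i l * A j k)
    (S : Fin 3 → Fin 3 → Fin 3 → Fin 3 → Fin 3 → ℝ)
    (hS : ∀ i j k l m, S i j k l m =
      β i k m * A j l + A i k * β j l m - β i l m * A j k - A i l * β j k m) :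
    (R 0 1 0 2 * R 1 2 1 2 - R 0 1 1 2 * R 0 2 1 2) * S 0 1 0 1 0
    - (R 0 1 0 2 * R 0 2 1 2 - R 0 1 1 2 * R 0 2 0 2) * S 0 1 0 1 1
    - (R 0 1 0 1 * R 1 2 1 2 - R 0 1 1 2 ^ 2) * S 0 1 0 2 0
    + (R 0 1 0 1 * R 0 2 1 2 - R 0 1 0 2 * R 0 1 1 2) * S 0 1 0 2 1
    + (R 0 1 0 1 * R 0 2 1 2 - R 0 1 0 2 * R 0 1 1 2) * S 0 1 1 2 0
    - (R 0 1 0 1 * R 0 2 0 2 - R 0 1 0 2 ^ 2) * S 0 1 1 2 1 = 0 := by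
  obtain rfl : R = Rivertz.gaussTensor A := by
    funext i j k l
    exact hR i j k l
  obtain rfl : S = Rivertz.derivedGaussTensor A β := by
    funext i j k l m
    exact hS i j k l m
  have codazzi : ∀ c, β 0 c 1 = β 1 c 0 := fun c => by
    rw [hβ1, hβ2, hβ1]
  change Rivertz.r₁ _ _ = 0
  rw [Rivertz.r₁_gaussTensor_eq_det_mul hA]
  simp [codazzi]
end

section
/- Let (α_{ij}) be a real symmetric 3×3 matrix and (β_{ijk}) a totally symmetric 3-tensor on ℝ³. Define R_{ijkl} = α_{ik}α_{jl} − α_{il}α_{jk} and S_{ijklm} = β_{ikm}α_{jl} + α_{ik}β_{jlm} − β_{ilm}α_{jk} − α_{il}β_{jkm}. Then r₆ := (R_{1313}R_{2323} − R_{1323}²)S_{12232} − (R_{1213}R_{2323} − R_{1223}R_{1323})S_{12233} − (R_{1213}R_{2323} − R_{1223}R_{1323})S_{13232} + (R_{1212}R_{2323} − R_{1223}²)S_{13233} + (R_{1213}R_{1323} − R_{1223}R_{1313})S_{23232} − (R_{1212}R_{1323} − R_{1213}R_{1223})S_{23233} = 0. -/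
/-!
The six coefficients of `r₆` are cofactors of the matrix of `2 × 2` minors of `α` (its second
compound, which for `3 × 3` matrices is the adjugate up to signs), so by Jacobi's identity
`adj (adj α) = det α • α` they are `det α` times entries of `α`. Hence `r₆ = det α * L` with `L`
linear in `β`, and `L` comes from differentiating `adj α * α = det α • 1`, which makes it vanish
by the symmetry of `β`.
-/

open Matrix

variable {K : Type*} [CommRing K] {n : Type*}

def gaussCurvature (A : Matrix n n K) (i j k l : n) : K :=
  A i k * A j l - A i l * A j k

/-- The derived Gauss equation: `S_{ijklm} = ∂_m R_{ijkl}` when `∂_m α_{ij} = β_{ijm}`. -/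
def gaussCurvatureDeriv (A : Matrix n n K) (β : n → n → n → K) (i j k l m : n) : K :=
  β i k m * A j l + A i k * β j l m - β i l m * A j k - A i l * β j k m

theorem gaussCurvature_minors_eq_det_mul {A : Matrix (Fin 3) (Fin 3) K} (hA : A.IsSymm) :
    gaussCurvature A 0 2 0 2 * gaussCurvature A 1 2 1 2 - gaussCurvature A 0 2 1 2 ^ 2
        = A.det * A 2 2 ∧
      gaussCurvature A 0 1 0 2 * gaussCurvature A 1 2 1 2
          - gaussCurvature A 0 1 1 2 * gaussCurvature A 0 2 1 2 = A.det * A 1 2 ∧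
      gaussCurvature A 0 1 0 1 * gaussCurvature A 1 2 1 2 - gaussCurvature A 0 1 1 2 ^ 2
        = A.det * A 1 1 ∧
      gaussCurvature A 0 1 0 2 * gaussCurvature A 0 2 1 2
          - gaussCurvature A 0 1 1 2 * gaussCurvature A 0 2 0 2 = A.det * A 0 2 ∧
      gaussCurvature A 0 1 0 1 * gaussCurvature A 0 2 1 2
          - gaussCurvature A 0 1 0 2 * gaussCurvature A 0 1 1 2 = A.det * A 0 1 := by
  refine ⟨?_, ?_, ?_, ?_, ?_⟩ <;>
    simp only [gaussCurvature, det_fin_three, hA.apply 0 1, hA.apply 0 2, hA.apply 1 2] <;> ring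

/- With `∂_m α_{ij} := β_{ijm}` one has `S_{pq12m} = ε_{pqr} ∂_m (adj α)_{0r}`, so the sum is
`ε_{0ms} ∂_m (adj α)_{0r} α_{rs}`. Differentiating `adj α * α = det α • 1` turns it into
`-ε_{0ms} (adj α)_{0r} β_{rsm}`, which vanishes as `β` is symmetric in its last two indices. -/
theorem gaussCurvatureDeriv_contraction_eq_zero {A : Matrix (Fin 3) (Fin 3) K} (hA : A.IsSymm)
    {β : Fin 3 → Fin 3 → Fin 3 → K} (hβ : ∀ i j k, β i j k = β i k j) :
    A 2 2 * gaussCurvatureDeriv A β 0 1 1 2 1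
      - A 1 2 * (gaussCurvatureDeriv A β 0 1 1 2 2 + gaussCurvatureDeriv A β 0 2 1 2 1)
      + A 1 1 * gaussCurvatureDeriv A β 0 2 1 2 2 + A 0 2 * gaussCurvatureDeriv A β 1 2 1 2 1
      - A 0 1 * gaussCurvatureDeriv A β 1 2 1 2 2 = 0 := by
  simp only [gaussCurvatureDeriv, hA.apply 1 2, hβ 0 2 1, hβ 1 2 1, hβ 2 2 1]
  ring

theorem rivertz_r6_vanishes_general (A : Matrix (Fin 3) (Fin 3) ℝ) (hA : A.IsSymm)
    (β : Fin 3 → Fin 3 → Fin 3 → ℝ)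
    (hβ2 : ∀ i j k, β i j k = β i k j)
    (R : Fin 3 → Fin 3 → Fin 3 → Fin 3 → ℝ)
    (hR : ∀ i j k l, R i j k l = A i k * A j l - A i l * A j k)
    (S : Fin 3 → Fin 3 → Fin 3 → Fin 3 → Fin 3 → ℝ)
    (hS : ∀ i j k l m, S i j k l m =
      β i k m * A j l + A i k * β j l m - β i l m * A j k - A i l * β j k m) :
    (R 0 2 0 2 * R 1 2 1 2 - R 0 2 1 2 ^ 2) * S 0 1 1 2 1
    - (R 0 1 0 2 * R 1 2 1 2 - R 0 1 1 2 * R 0 2 1 2) * S 0 1 1 2 2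
    - (R 0 1 0 2 * R 1 2 1 2 - R 0 1 1 2 * R 0 2 1 2) * S 0 2 1 2 1
    + (R 0 1 0 1 * R 1 2 1 2 - R 0 1 1 2 ^ 2) * S 0 2 1 2 2
    + (R 0 1 0 2 * R 0 2 1 2 - R 0 1 1 2 * R 0 2 0 2) * S 1 2 1 2 1
    - (R 0 1 0 1 * R 0 2 1 2 - R 0 1 0 2 * R 0 1 1 2) * S 1 2 1 2 2 = 0 := by
  obtain rfl : R = gaussCurvature A := by funext i j k l; exact hR i j k l
  obtain rfl : S = gaussCurvatureDeriv A β := by funext i j k l m; exact hS i j k l m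
  obtain ⟨h₁, h₂, h₃, h₄, h₅⟩ := gaussCurvature_minors_eq_det_mul hA
  rw [h₁, h₂, h₃, h₄, h₅]
  linear_combination A.det * gaussCurvatureDeriv_contraction_eq_zero hA hβ2

theorem rivertz_r6_vanishes (A : Matrix (Fin 3) (Fin 3) ℝ) (hA : A.IsSymm)
    (β : Fin 3 → Fin 3 → Fin 3 → ℝ)
    (hβ1 : ∀ i j k, β i j k = β j i k)
    (hβ2 : ∀ i j k, β i j k = β i k j)
    (R : Fin 3 → Fin 3 → Fin 3 → Fin 3 → ℝ)
    (hR : ∀ i j k l, R i j k l = A i k * A j l - A i l * A j k)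
    (S : Fin 3 → Fin 3 → Fin 3 → Fin 3 → Fin 3 → ℝ)
    (hS : ∀ i j k l m, S i j k l m =
      β i k m * A j l + A i k * β j l m - β i l m * A j k - A i l * β j k m) :
    (R 0 2 0 2 * R 1 2 1 2 - R 0 2 1 2 ^ 2) * S 0 1 1 2 1
    - (R 0 1 0 2 * R 1 2 1 2 - R 0 1 1 2 * R 0 2 1 2) * S 0 1 1 2 2
    - (R 0 1 0 2 * R 1 2 1 2 - R 0 1 1 2 * R 0 2 1 2) * S 0 2 1 2 1
    + (R 0 1 0 1 * R 1 2 1 2 - R 0 1 1 2 ^ 2) * S 0 2 1 2 2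
    + (R 0 1 0 2 * R 0 2 1 2 - R 0 1 1 2 * R 0 2 0 2) * S 1 2 1 2 1
    - (R 0 1 0 1 * R 0 2 1 2 - R 0 1 0 2 * R 0 1 1 2) * S 1 2 1 2 2 = 0 :=
  rivertz_r6_vanishes_general A hA β hβ2 R hR S hS
end

section
/- Let p, q, k, l ∈ ℝ with k ≠ 0, l ≠ 0 and p²(k² + l²) = 1, and let f(x₁) = p x₁ + q. Define φ : ℝ³ → ℝ⁴ by φ(x₁,x₂,x₃) = (k f(x₁) cos(x₂/k), k f(x₁) sin(x₂/k), l f(x₁) cos(x₃/l), l f(x₁) sin(x₃/l)). Then at every point, ⟨∂₁φ, ∂₁φ⟩ = 1, ⟨∂₂φ, ∂₂φ⟩ = f(x₁)², ⟨∂₃φ, ∂₃φ⟩ = f(x₁)², and the mixed inner products ⟨∂₁φ, ∂₂φ⟩, ⟨∂₁φ, ∂₃φ⟩, ⟨∂₂φ, ∂₃φ⟩ all vanish; i.e., φ pulls back the Euclidean metric on ℝ⁴ to dx₁² + f(x₁)²(dx₂² + dx₃²). -/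
/-!
The map is a cone `φ(x₁, y) = f(x₁) • T(y)` over the product `T` of the circles of radii `k` and
`l`, both parametrised by arc length. `T` is a flat torus on the sphere of radius `√(k² + l²)`,
so its coordinate derivatives are orthonormal and orthogonal to the radial vector `T`. Hence
`∂₁φ = p • T` has squared length `p²(k² + l²) = 1` and is orthogonal to `∂ᵢφ = f • ∂ᵢT`,
whose squared lengths are `f²`.
-/

open Matrix Real

lemma hasDerivAt_mul_cos_div {r : ℝ} (hr : r ≠ 0) (x : ℝ) :
    HasDerivAt (fun s => r * cos (s / r)) (-sin (x / r)) x := by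
  have h := ((hasDerivAt_cos (x / r)).comp x ((hasDerivAt_id x).div_const r)).const_mul r
  exact h.congr_deriv (by field_simp)

lemma hasDerivAt_mul_sin_div {r : ℝ} (hr : r ≠ 0) (x : ℝ) :
    HasDerivAt (fun s => r * sin (s / r)) (cos (x / r)) x := by
  have h := ((hasDerivAt_sin (x / r)).comp x ((hasDerivAt_id x).div_const r)).const_mul r
  exact h.congr_deriv (by field_simp)

noncomputable def flatTorus (k l y z : ℝ) : Fin 4 → ℝ :=
  ![k * cos (y / k), k * sin (y / k), l * cos (z / l), l * sin (z / l)]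

section flatTorus

variable {k l : ℝ}

lemma flatTorus_dotProduct_self (y z : ℝ) :
    flatTorus k l y z ⬝ᵥ flatTorus k l y z = k ^ 2 + l ^ 2 := by
  simp only [flatTorus, dotProduct, Fin.sum_univ_four, cons_val_zero, cons_val_one, cons_val]
  linear_combination k ^ 2 * cos_sq_add_sin_sq (y / k) + l ^ 2 * cos_sq_add_sin_sq (z / l)

lemma hasDerivAt_flatTorus_fst (hk : k ≠ 0) (y z : ℝ) :
    HasDerivAt (fun s => flatTorus k l s z) ![-sin (y / k), cos (y / k), 0, 0] y := by
  rw [hasDerivAt_pi]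
  intro i
  fin_cases i
  exacts [hasDerivAt_mul_cos_div hk y, hasDerivAt_mul_sin_div hk y,
    hasDerivAt_const _ _, hasDerivAt_const _ _]

lemma hasDerivAt_flatTorus_snd (hl : l ≠ 0) (y z : ℝ) :
    HasDerivAt (fun s => flatTorus k l y s) ![0, 0, -sin (z / l), cos (z / l)] z := by
  rw [hasDerivAt_pi]
  intro i
  fin_cases i
  exacts [hasDerivAt_const _ _, hasDerivAt_const _ _,
    hasDerivAt_mul_cos_div hl z, hasDerivAt_mul_sin_div hl z]

end flatTorus

theorem flat_fiber_linear_warping_immersion (p q k l : ℝ)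
    (hk : k ≠ 0) (hl : l ≠ 0) (h : p ^ 2 * (k ^ 2 + l ^ 2) = 1)
    (f : ℝ → ℝ) (hf : ∀ x, f x = p * x + q)
    (φ : ℝ → ℝ → ℝ → (Fin 4 → ℝ))
    (hφ : ∀ x₁ x₂ x₃, φ x₁ x₂ x₃ =
      ![k * f x₁ * Real.cos (x₂ / k), k * f x₁ * Real.sin (x₂ / k),
        l * f x₁ * Real.cos (x₃ / l), l * f x₁ * Real.sin (x₃ / l)]) :
    ∀ x₁ x₂ x₃ : ℝ,
      (deriv (fun s => φ s x₂ x₃) x₁) ⬝ᵥ (deriv (fun s => φ s x₂ x₃) x₁) = 1 ∧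
      (deriv (fun s => φ x₁ s x₃) x₂) ⬝ᵥ (deriv (fun s => φ x₁ s x₃) x₂) = f x₁ ^ 2 ∧
      (deriv (fun s => φ x₁ x₂ s) x₃) ⬝ᵥ (deriv (fun s => φ x₁ x₂ s) x₃) = f x₁ ^ 2 ∧
      (deriv (fun s => φ s x₂ x₃) x₁) ⬝ᵥ (deriv (fun s => φ x₁ s x₃) x₂) = 0 ∧
      (deriv (fun s => φ s x₂ x₃) x₁) ⬝ᵥ (deriv (fun s => φ x₁ x₂ s) x₃) = 0 ∧
      (deriv (fun s => φ x₁ s x₃) x₂) ⬝ᵥ (deriv (fun s => φ x₁ x₂ s) x₃) = 0 := by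
  have hcone : φ = fun x₁ x₂ x₃ => f x₁ • flatTorus k l x₂ x₃ := by
    ext x₁ x₂ x₃ i
    fin_cases i <;>
      simp only [hφ, flatTorus, Pi.smul_apply, smul_eq_mul, Fin.zero_eta, Fin.mk_one, Fin.reduceFinMk,
        Fin.isValue, cons_val_zero, cons_val_one, cons_val] <;> ring
  intro x₁ x₂ x₃
  have hf' : HasDerivAt f p x₁ := by
    simpa [funext hf] using ((hasDerivAt_id x₁).const_mul p).add_const q
  have hd₁ : deriv (fun s => φ s x₂ x₃) x₁ = p • flatTorus k l x₂ x₃ := by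
    rw [hcone]
    exact (hf'.smul_const _).deriv
  have hd₂ : deriv (fun s => φ x₁ s x₃) x₂ = f x₁ • ![-sin (x₂ / k), cos (x₂ / k), 0, 0] := by
    rw [hcone]
    exact ((hasDerivAt_flatTorus_fst (l := l) hk x₂ x₃).const_smul (f x₁)).deriv
  have hd₃ : deriv (fun s => φ x₁ x₂ s) x₃ = f x₁ • ![0, 0, -sin (x₃ / l), cos (x₃ / l)] := by
    rw [hcone]
    exact ((hasDerivAt_flatTorus_snd (k := k) hl x₂ x₃).const_smul (f x₁)).deriv
  rw [hd₁, hd₂, hd₃]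
  simp only [smul_dotProduct, dotProduct_smul, smul_eq_mul, flatTorus_dotProduct_self]
  simp only [flatTorus, dotProduct, Fin.sum_univ_four, cons_val_zero, cons_val_one, cons_val]
  refine ⟨?_, ?_, ?_, ?_, ?_, ?_⟩
  · linear_combination h
  · linear_combination f x₁ ^ 2 * sin_sq_add_cos_sq (x₂ / k)
  · linear_combination f x₁ ^ 2 * sin_sq_add_cos_sq (x₃ / l)
  all_goals ring
end

section
/- Let I ⊆ ℝ be an open interval, A > 0 a constant, and E, G, f : I → ℝ differentiable with G > 0 and A·G'(x)²/G(x) + f'(x)² = E(x) for all x ∈ I. Define φ(x₁,x₂,x₃) = (2√(A·G(x₁))·cos(x₂/(2√A)), 2√(A·G(x₁))·sin(x₂/(2√A)), f(x₁)·cos x₃, f(x₁)·sin x₃) ∈ ℝ⁴. Then ⟨∂₁φ,∂₁φ⟩ = E(x₁), ⟨∂₂φ,∂₂φ⟩ = G(x₁), ⟨∂₃φ,∂₃φ⟩ = f(x₁)², and all mixed inner products ⟨∂ᵢφ,∂ⱼφ⟩ (i ≠ j) vanish; i.e., φ pulls back the Euclidean metric to E dx₁² + G dx₂² + f² dx₃².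 -/
open Matrix Real

/-!
Write `ρ = 2√(A G)`, `θ = x₂ / (2√A)` and `R(θ, ψ)` for the rotation by `θ` in the first
coordinate plane of `ℝ⁴` and by `ψ` in the second. Then `φ = R(θ, x₃) (ρ, 0, f, 0)`, and
differentiating a curve `R(θ, ψ) (ρ, 0, σ, 0)` gives `R(θ, ψ) (ρ', ρ θ', σ', σ ψ')`. As `R` preserves
dot products, the partials of `φ` may be replaced by `(ρ', 0, f', 0)`, `(0, ρ / (2√A), 0, 0)` and
`(0, 0, 0, f)`: pairwise orthogonal, with squared lengths `A G'² / G + f'² = E`, `G` and `f²`.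
-/

noncomputable def blockRotation (θ ψ : ℝ) : Matrix (Fin 4) (Fin 4) ℝ :=
  !![cos θ, -sin θ, 0, 0;
     sin θ, cos θ, 0, 0;
     0, 0, cos ψ, -sin ψ;
     0, 0, sin ψ, cos ψ]

theorem blockRotation_mulVec (θ ψ : ℝ) (u : Fin 4 → ℝ) :
    blockRotation θ ψ *ᵥ u = ![u 0 * cos θ - u 1 * sin θ, u 0 * sin θ + u 1 * cos θ,
      u 2 * cos ψ - u 3 * sin ψ, u 2 * sin ψ + u 3 * cos ψ] := by
  ext i
  fin_cases i <;>
    simp only [blockRotation, mulVec, dotProduct, Fin.sum_univ_four, of_apply, cons_val',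
      cons_val_fin_one, cons_val, cons_val_zero, cons_val_one, Fin.zero_eta, Fin.mk_one,
      Fin.reduceFinMk, Fin.isValue, Nat.succ_eq_add_one, Nat.reduceAdd] <;>
    ring

theorem blockRotation_mulVec_dotProduct (θ ψ : ℝ) (u v : Fin 4 → ℝ) :
    blockRotation θ ψ *ᵥ u ⬝ᵥ blockRotation θ ψ *ᵥ v = u ⬝ᵥ v := by
  simp only [blockRotation_mulVec, dotProduct, Fin.sum_univ_four, cons_val_zero, cons_val_one,
    cons_val_two, cons_val_three, head_cons, tail_cons]
  linear_combination (u 0 * v 0 + u 1 * v 1) * sin_sq_add_cos_sq θ +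
    (u 2 * v 2 + u 3 * v 3) * sin_sq_add_cos_sq ψ

theorem blockRotation_mulVec_polar (θ ψ r t : ℝ) :
    blockRotation θ ψ *ᵥ ![r, 0, t, 0] = ![r * cos θ, r * sin θ, t * cos ψ, t * sin ψ] := by
  simp only [blockRotation_mulVec, cons_val_zero, cons_val_one, cons_val_two, cons_val_three,
    head_cons, tail_cons, zero_mul, sub_zero, add_zero]

theorem hasDerivAt_blockRotation_mulVec_polar {ρ θ σ ψ : ℝ → ℝ} {ρ' θ' σ' ψ' x : ℝ}
    (hρ : HasDerivAt ρ ρ' x) (hθ : HasDerivAt θ θ' x)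
    (hσ : HasDerivAt σ σ' x) (hψ : HasDerivAt ψ ψ' x) :
    HasDerivAt (fun s => blockRotation (θ s) (ψ s) *ᵥ ![ρ s, 0, σ s, 0])
      (blockRotation (θ x) (ψ x) *ᵥ ![ρ', ρ x * θ', σ', σ x * ψ']) x := by
  simp only [blockRotation_mulVec_polar]
  rw [blockRotation_mulVec]
  refine hasDerivAt_pi.2 fun i => ?_
  fin_cases i <;> simp only [Fin.zero_eta, Fin.mk_one, Fin.reduceFinMk, cons_val_zero, cons_val_one,
    cons_val_two, cons_val_three, head_cons, tail_cons]
  · exact (hρ.mul hθ.cos).congr_deriv (by ring)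
  · exact (hρ.mul hθ.sin).congr_deriv (by ring)
  · exact (hσ.mul hψ.cos).congr_deriv (by ring)
  · exact (hσ.mul hψ.sin).congr_deriv (by ring)

theorem two_mul_div_two_sqrt_mul_sq {A g : ℝ} (g' : ℝ) (hA : 0 < A) (hg : 0 < g) :
    (2 * (A * g' / (2 * √(A * g)))) ^ 2 = A * g' ^ 2 / g := by
  have hAg : 0 < A * g := mul_pos hA hg
  have hsAg_ne : √(A * g) ≠ 0 := (sqrt_pos.2 hAg).ne'
  field_simp
  rw [sq_sqrt hAg.le]
  ring

theorem two_sqrt_mul_div_two_sqrt_sq {A g : ℝ} (hA : 0 < A) (hg : 0 ≤ g) :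
    (2 * √(A * g) * (1 / (2 * √A))) ^ 2 = g := by
  have hsA_ne : √A ≠ 0 := (sqrt_pos.2 hA).ne'
  field_simp
  rw [sq_sqrt (mul_nonneg hA.le hg), sq_sqrt hA.le]
  ring

theorem one_variable_metric_immersion_general (a b A : ℝ) (hA : 0 < A)
    (E G f G' f' : ℝ → ℝ)
    (hG : ∀ x ∈ Set.Ioo a b, HasDerivAt G (G' x) x)
    (hf : ∀ x ∈ Set.Ioo a b, HasDerivAt f (f' x) x)
    (hGpos : ∀ x ∈ Set.Ioo a b, 0 < G x)
    (hcon : ∀ x ∈ Set.Ioo a b, A * G' x ^ 2 / G x + f' x ^ 2 = E x)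
    (φ : ℝ → ℝ → ℝ → (Fin 4 → ℝ))
    (hφ : ∀ x₁ x₂ x₃, φ x₁ x₂ x₃ =
      ![2 * Real.sqrt (A * G x₁) * Real.cos (x₂ / (2 * Real.sqrt A)),
        2 * Real.sqrt (A * G x₁) * Real.sin (x₂ / (2 * Real.sqrt A)),
        f x₁ * Real.cos x₃, f x₁ * Real.sin x₃]) :
    ∀ x₁ ∈ Set.Ioo a b, ∀ x₂ x₃ : ℝ,
      (deriv (fun s => φ s x₂ x₃) x₁) ⬝ᵥ (deriv (fun s => φ s x₂ x₃) x₁) = E x₁ ∧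
      (deriv (fun s => φ x₁ s x₃) x₂) ⬝ᵥ (deriv (fun s => φ x₁ s x₃) x₂) = G x₁ ∧
      (deriv (fun s => φ x₁ x₂ s) x₃) ⬝ᵥ (deriv (fun s => φ x₁ x₂ s) x₃) = f x₁ ^ 2 ∧
      (deriv (fun s => φ s x₂ x₃) x₁) ⬝ᵥ (deriv (fun s => φ x₁ s x₃) x₂) = 0 ∧
      (deriv (fun s => φ s x₂ x₃) x₁) ⬝ᵥ (deriv (fun s => φ x₁ x₂ s) x₃) = 0 ∧
      (deriv (fun s => φ x₁ s x₃) x₂) ⬝ᵥ (deriv (fun s => φ x₁ x₂ s) x₃) = 0 := by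
  intro x₁ hx x₂ x₃
  have hφ_rot : ∀ x₁ x₂ x₃,
      φ x₁ x₂ x₃ = blockRotation (x₂ / (2 * √A)) x₃ *ᵥ ![2 * √(A * G x₁), 0, f x₁, 0] :=
    fun x₁ x₂ x₃ => by rw [hφ, blockRotation_mulVec_polar]
  have hρ : HasDerivAt (fun s => 2 * √(A * G s)) (2 * (A * G' x₁ / (2 * √(A * G x₁)))) x₁ :=
    (((hG x₁ hx).const_mul A).sqrt (mul_pos hA (hGpos x₁ hx)).ne').const_mul 2
  have h₁ : HasDerivAt (fun s => φ s x₂ x₃) (blockRotation (x₂ / (2 * √A)) x₃ *ᵥ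
      ![2 * (A * G' x₁ / (2 * √(A * G x₁))), 0, f' x₁, 0]) x₁ := by
    simpa [hφ_rot] using hasDerivAt_blockRotation_mulVec_polar hρ (hasDerivAt_const x₁ _)
      (hf x₁ hx) (hasDerivAt_const x₁ x₃)
  have h₂ : HasDerivAt (fun s => φ x₁ s x₃) (blockRotation (x₂ / (2 * √A)) x₃ *ᵥ
      ![0, 2 * √(A * G x₁) * (1 / (2 * √A)), 0, 0]) x₂ := by
    simpa [hφ_rot] using hasDerivAt_blockRotation_mulVec_polar (hasDerivAt_const x₂ _)
      ((hasDerivAt_id x₂).div_const (2 * √A)) (hasDerivAt_const x₂ (f x₁))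
      (hasDerivAt_const x₂ x₃)
  have h₃ : HasDerivAt (fun s => φ x₁ x₂ s) (blockRotation (x₂ / (2 * √A)) x₃ *ᵥ
      ![0, 0, 0, f x₁]) x₃ := by
    simpa [hφ_rot] using hasDerivAt_blockRotation_mulVec_polar (hasDerivAt_const x₃ _)
      (hasDerivAt_const x₃ _) (hasDerivAt_const x₃ (f x₁)) (hasDerivAt_id x₃)
  rw [h₁.deriv, h₂.deriv, h₃.deriv]
  simp only [blockRotation_mulVec_dotProduct]
  simp only [dotProduct, Fin.sum_univ_four, cons_val_zero, cons_val_one, cons_val_two,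
    cons_val_three, head_cons, tail_cons]
  refine ⟨?_, ?_, by ring, by ring, by ring, by ring⟩
  · linear_combination two_mul_div_two_sqrt_mul_sq (G' x₁) hA (hGpos x₁ hx) + hcon x₁ hx
  · linear_combination two_sqrt_mul_div_two_sqrt_sq hA (hGpos x₁ hx).le

theorem one_variable_metric_immersion (a b A : ℝ) (hA : 0 < A)
    (E G f E' G' f' : ℝ → ℝ)
    (hE : ∀ x ∈ Set.Ioo a b, HasDerivAt E (E' x) x)
    (hG : ∀ x ∈ Set.Ioo a b, HasDerivAt G (G' x) x)
    (hf : ∀ x ∈ Set.Ioo a b, HasDerivAt f (f' x) x)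
    (hGpos : ∀ x ∈ Set.Ioo a b, 0 < G x)
    (hcon : ∀ x ∈ Set.Ioo a b, A * G' x ^ 2 / G x + f' x ^ 2 = E x)
    (φ : ℝ → ℝ → ℝ → (Fin 4 → ℝ))
    (hφ : ∀ x₁ x₂ x₃, φ x₁ x₂ x₃ =
      ![2 * Real.sqrt (A * G x₁) * Real.cos (x₂ / (2 * Real.sqrt A)),
        2 * Real.sqrt (A * G x₁) * Real.sin (x₂ / (2 * Real.sqrt A)),
        f x₁ * Real.cos x₃, f x₁ * Real.sin x₃]) :
    ∀ x₁ ∈ Set.Ioo a b, ∀ x₂ x₃ : ℝ,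
      (deriv (fun s => φ s x₂ x₃) x₁) ⬝ᵥ (deriv (fun s => φ s x₂ x₃) x₁) = E x₁ ∧
      (deriv (fun s => φ x₁ s x₃) x₂) ⬝ᵥ (deriv (fun s => φ x₁ s x₃) x₂) = G x₁ ∧
      (deriv (fun s => φ x₁ x₂ s) x₃) ⬝ᵥ (deriv (fun s => φ x₁ x₂ s) x₃) = f x₁ ^ 2 ∧
      (deriv (fun s => φ s x₂ x₃) x₁) ⬝ᵥ (deriv (fun s => φ x₁ s x₃) x₂) = 0 ∧
      (deriv (fun s => φ s x₂ x₃) x₁) ⬝ᵥ (deriv (fun s => φ x₁ x₂ s) x₃) = 0 ∧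
      (deriv (fun s => φ x₁ s x₃) x₂) ⬝ᵥ (deriv (fun s => φ x₁ x₂ s) x₃) = 0 :=
  one_variable_metric_immersion_general a b A hA E G f G' f' hG hf hGpos hcon φ hφ
end

section
/- Fix α ∈ ℝ and k > 0, let I ⊆ (0,∞) be an open interval, and let f : I → ℝ be differentiable with f'(x)² = (1 − k²x² − α²x^{2α})/x² on I. Define φ : I × ℝ × ℝ → ℝ⁵ by φ(x,y,z) = (f(x), kx·cos(y/(kx)), kx·sin(y/(kx)), x^α·cos(z/x^α), x^α·sin(z/x^α)). Then at every point: ⟨∂ₓφ,∂ₓφ⟩ = (1 + y² + α²z²)/x², ⟨∂ₓφ,∂_yφ⟩ = −y/x, ⟨∂ₓφ,∂_zφ⟩ = −αz/x, ⟨∂_yφ,∂_yφ⟩ = 1, ⟨∂_zφ,∂_zφ⟩ = 1, ⟨∂_yφ,∂_zφ⟩ = 0. Consequently φ pulls back the Euclidean metric on ℝ⁵ to the left-invariant metric x^{-2}(dx² + (x dy − y dx)² + (x dz − α z dx)²). -/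
/-!
For fixed `x`, the map `y ↦ r (cos (y / r), sin (y / r))` runs around the circle of radius
`r = r(x)` at unit speed, so `∂_y φ` and `∂_z φ` are orthonormal. Differentiating in `x`, the
same two coordinates move by `r' · (radial unit vector) - (y r' / r) · (tangent vector)`, which
produces the cross terms `-y r' / r` and contributes `r'² + (y r' / r)²` to `|∂_x φ|²`. For
`r = k x` and `r = x ^ α` the ratios `y r' / r` become `y / x` and `α z / x`, and the equation
for `f'` is exactly what makes the remaining radial part `f'² + k² + α² x ^ (2α) / x²` equal
to `1 / x²`.
-/

open Matrix Real

theorem HasDerivAt.vecCons {𝕜 F : Type*} [NontriviallyNormedField 𝕜] [NormedAddCommGroup F]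
    [NormedSpace 𝕜 F] {n : ℕ} {f : 𝕜 → F} {g : 𝕜 → Fin n → F} {a : F} {v : Fin n → F} {x : 𝕜}
    (hf : HasDerivAt f a x) (hg : HasDerivAt g v x) :
    HasDerivAt (fun s => vecCons (f s) (g s)) (vecCons a v) x :=
  hasDerivAt_pi.2 fun i => Fin.cases hf (fun j => hasDerivAt_pi.1 hg j) i

theorem hasDerivAt_vecEmpty {𝕜 F : Type*} [NontriviallyNormedField 𝕜] [NormedAddCommGroup F]
    [NormedSpace 𝕜 F] (x : 𝕜) : HasDerivAt (fun _ => (![] : Fin 0 → F)) ![] x :=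
  (hasDerivAt_const x _).congr_deriv (Subsingleton.elim _ _)

theorem HasDerivAt.mul_cos_div_self {r : ℝ → ℝ} {r' x : ℝ} (hr : HasDerivAt r r' x)
    (hx : r x ≠ 0) (y : ℝ) :
    HasDerivAt (fun s => r s * Real.cos (y / r s))
      (r' * Real.cos (y / r x) + y * r' / r x * Real.sin (y / r x)) x := by
  refine (hr.mul ((hasDerivAt_const x y).div hr hx).cos).congr_deriv ?_
  simp only [Pi.div_apply]
  field_simp
  ring

theorem HasDerivAt.mul_sin_div_self {r : ℝ → ℝ} {r' x : ℝ} (hr : HasDerivAt r r' x)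
    (hx : r x ≠ 0) (y : ℝ) :
    HasDerivAt (fun s => r s * Real.sin (y / r s))
      (r' * Real.sin (y / r x) - y * r' / r x * Real.cos (y / r x)) x := by
  refine (hr.mul ((hasDerivAt_const x y).div hr hx).sin).congr_deriv ?_
  simp only [Pi.div_apply]
  field_simp
  ring

theorem hasDerivAt_mul_cos_div_s16 {c : ℝ} (hc : c ≠ 0) (y : ℝ) :
    HasDerivAt (fun t => c * Real.cos (t / c)) (-Real.sin (y / c)) y := by
  refine ((((hasDerivAt_id' y).div_const c).cos).const_mul c).congr_deriv ?_
  field_simp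

theorem hasDerivAt_mul_sin_div_s16 {c : ℝ} (hc : c ≠ 0) (y : ℝ) :
    HasDerivAt (fun t => c * Real.sin (t / c)) (Real.cos (y / c)) y := by
  refine ((((hasDerivAt_id' y).div_const c).sin).const_mul c).congr_deriv ?_
  field_simp

theorem dotProduct_circleFrame (p a b θ c d ψ : ℝ) :
    let u : Fin 5 → ℝ := ![p, a * cos θ + b * sin θ, a * sin θ - b * cos θ,
      c * cos ψ + d * sin ψ, c * sin ψ - d * cos ψ]
    let v : Fin 5 → ℝ := ![0, -sin θ, cos θ, 0, 0]
    let w : Fin 5 → ℝ := ![0, 0, 0, -sin ψ, cos ψ]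
    u ⬝ᵥ u = p ^ 2 + a ^ 2 + b ^ 2 + c ^ 2 + d ^ 2 ∧ u ⬝ᵥ v = -b ∧ u ⬝ᵥ w = -d ∧
      v ⬝ᵥ v = 1 ∧ w ⬝ᵥ w = 1 ∧ v ⬝ᵥ w = 0 := by
  have hθ := sin_sq_add_cos_sq θ
  have hψ := sin_sq_add_cos_sq ψ
  simp only [dotProduct, Fin.sum_univ_five, cons_val_zero, cons_val_one, cons_val_two,
    cons_val_three, cons_val_four, head_cons, tail_cons]
  refine ⟨?_, ?_, ?_, ?_, ?_, ?_⟩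
  · linear_combination (a ^ 2 + b ^ 2) * hθ + (c ^ 2 + d ^ 2) * hψ
  · linear_combination -b * hθ
  · linear_combination -d * hψ
  · linear_combination hθ
  · linear_combination hψ
  · ring

noncomputable def circleWrap (f r₁ r₂ : ℝ → ℝ) (x y z : ℝ) : Fin 5 → ℝ :=
  ![f x, r₁ x * cos (y / r₁ x), r₁ x * sin (y / r₁ x), r₂ x * cos (z / r₂ x),
    r₂ x * sin (z / r₂ x)]

theorem circleWrap_gram {f r₁ r₂ : ℝ → ℝ} {f' r₁' r₂' x : ℝ} (hf : HasDerivAt f f' x)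
    (hr₁ : HasDerivAt r₁ r₁' x) (hr₂ : HasDerivAt r₂ r₂' x) (hr₁x : r₁ x ≠ 0) (hr₂x : r₂ x ≠ 0)
    (y z : ℝ) :
    let Dx := deriv (fun s => circleWrap f r₁ r₂ s y z) x
    let Dy := deriv (fun s => circleWrap f r₁ r₂ x s z) y
    let Dz := deriv (fun s => circleWrap f r₁ r₂ x y s) z
    Dx ⬝ᵥ Dx = f' ^ 2 + r₁' ^ 2 + (y * r₁' / r₁ x) ^ 2 + r₂' ^ 2 + (z * r₂' / r₂ x) ^ 2 ∧
      Dx ⬝ᵥ Dy = -(y * r₁' / r₁ x) ∧ Dx ⬝ᵥ Dz = -(z * r₂' / r₂ x) ∧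
      Dy ⬝ᵥ Dy = 1 ∧ Dz ⬝ᵥ Dz = 1 ∧ Dy ⬝ᵥ Dz = 0 := by
  have hDx := hf.vecCons <| (hr₁.mul_cos_div_self hr₁x y).vecCons <|
    (hr₁.mul_sin_div_self hr₁x y).vecCons <| (hr₂.mul_cos_div_self hr₂x z).vecCons <|
    (hr₂.mul_sin_div_self hr₂x z).vecCons <| hasDerivAt_vecEmpty x
  have hDy := (hasDerivAt_const y (f x)).vecCons <| (hasDerivAt_mul_cos_div_s16 hr₁x y).vecCons <|
    (hasDerivAt_mul_sin_div_s16 hr₁x y).vecCons <|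
    (hasDerivAt_const y (r₂ x * cos (z / r₂ x))).vecCons <|
    (hasDerivAt_const y (r₂ x * sin (z / r₂ x))).vecCons <| hasDerivAt_vecEmpty y
  have hDz := (hasDerivAt_const z (f x)).vecCons <|
    (hasDerivAt_const z (r₁ x * cos (y / r₁ x))).vecCons <|
    (hasDerivAt_const z (r₁ x * sin (y / r₁ x))).vecCons <|
    (hasDerivAt_mul_cos_div_s16 hr₂x z).vecCons <| (hasDerivAt_mul_sin_div_s16 hr₂x z).vecCons <|
    hasDerivAt_vecEmpty z
  simp only [circleWrap, hDx.deriv, hDy.deriv, hDz.deriv]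
  exact dotProduct_circleFrame _ _ _ _ _ _ _

theorem lie_group_embedding_R5 (α k a b : ℝ) (hk : 0 < k)
    (hI : Set.Ioo a b ⊆ Set.Ioi (0 : ℝ))
    (f f' : ℝ → ℝ)
    (hf : ∀ x ∈ Set.Ioo a b, HasDerivAt f (f' x) x)
    (hcon : ∀ x ∈ Set.Ioo a b,
      f' x ^ 2 = (1 - k ^ 2 * x ^ 2 - α ^ 2 * x ^ (2 * α)) / x ^ 2)
    (φ : ℝ → ℝ → ℝ → (Fin 5 → ℝ))
    (hφ : ∀ x y z, φ x y z =
      ![f x, k * x * Real.cos (y / (k * x)), k * x * Real.sin (y / (k * x)),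
        x ^ α * Real.cos (z / x ^ α), x ^ α * Real.sin (z / x ^ α)]) :
    ∀ x ∈ Set.Ioo a b, ∀ y z : ℝ,
      (deriv (fun s => φ s y z) x) ⬝ᵥ (deriv (fun s => φ s y z) x)
        = (1 + y ^ 2 + α ^ 2 * z ^ 2) / x ^ 2 ∧
      (deriv (fun s => φ s y z) x) ⬝ᵥ (deriv (fun s => φ x s z) y) = -y / x ∧
      (deriv (fun s => φ s y z) x) ⬝ᵥ (deriv (fun s => φ x y s) z) = -α * z / x ∧
      (deriv (fun s => φ x s z) y) ⬝ᵥ (deriv (fun s => φ x s z) y) = 1 ∧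
      (deriv (fun s => φ x y s) z) ⬝ᵥ (deriv (fun s => φ x y s) z) = 1 ∧
      (deriv (fun s => φ x s z) y) ⬝ᵥ (deriv (fun s => φ x y s) z) = 0 := by
  obtain rfl : φ = circleWrap f (k * ·) (· ^ α) := funext₃ hφ
  intro x hx y z
  have hx₀ : 0 < x := hI hx
  have hkx : k * x ≠ 0 := by positivity
  have hxα : x ^ α ≠ 0 := (rpow_pos_of_pos hx₀ α).ne'
  have hlin : HasDerivAt (k * ·) k x := by simpa using (hasDerivAt_id x).const_mul k
  have hpow : HasDerivAt (· ^ α) (α * x ^ α / x) x := by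
    refine (hasDerivAt_rpow_const (Or.inl hx₀.ne')).congr_deriv ?_
    rw [rpow_sub_one hx₀.ne', mul_div_assoc]
  obtain ⟨hxx, hxy, hxz, hyy, hzz, hyz⟩ := circleWrap_gram (hf x hx) hlin hpow hkx hxα y z
  have hy : y * k / (k * x) = y / x := by field_simp
  have hz : z * (α * x ^ α / x) / x ^ α = α * z / x := by field_simp
  have hpow₂ : x ^ (2 * α) = (x ^ α) ^ 2 := by
    rw [← rpow_natCast, ← rpow_mul hx₀.le, Nat.cast_ofNat, mul_comm]
  refine ⟨?_, ?_, ?_, hyy, hzz, hyz⟩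
  · rw [hxx, hy, hz, hcon x hx, hpow₂]
    field_simp
    ring
  · rw [hxy, hy, neg_div]
  · rw [hxz, hz, neg_mul, neg_div]
end

section
/- Let a, b, c, d ∈ ℝ with b ≠ 0 and 0 < d < c. On an open set U ⊆ ℝ² containing the origin on which t := 2a x₁ + 2b x₂ satisfies ct + d > 0, a² + b²(t+1) > 0, and E := 1 + 2a x₁ + 2b x₂ > 0, define f(x₁,x₂) = (1/2)·∫_{−d/c}^{2a x₁ + 2b x₂} √((cs+d)/(a² + b²(s+1))) ds. Then f satisfies the Monge–Ampère equation f₁₁f₂₂ − f₁₂² − (a/E)·f₁f₂₂ + b·f₂f₂₂ + (2b/E)·f₁f₁₂ + (b²/E)·f₂² = b²c/E on U, and moreover f₁(0,0)² + f₂(0,0)² < c, where fᵢ and f_{ij} denote first and second partial derivatives. -/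
/-!
The function is a ridge function `f x = F (t x)` with `t x = 2 a x₁ + 2 b x₂` and
`F' = g := √q / 2`, `q t = (c t + d) / (a² + b² (t + 1))`. Hence every partial derivative of
order `k` is `g⁽ᵏ⁻¹⁾ ∘ t` times the matching coefficients `2a`, `2b`; the Hessian determinant
vanishes and, with `E = 1 + t`, the remaining terms collapse to
`(4 b² / E) ((a² + b² (1 + t)) u' + b² u)` for `u = g² = q / 4`, which solves
`(a² + b² (1 + t)) u' + b² u = c / 4`. At the origin `f₁² + f₂² = (a² + b²) q 0 = d < c`.
-/

open Real

section Ridge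

variable {U : Set (ℝ × ℝ)} {f : ℝ × ℝ → ℝ} {φ : ℝ → ℝ} {α β φ' : ℝ} {x : ℝ × ℝ}

theorem deriv_fst_of_eqOn_ridge (hU : IsOpen U) (hf : ∀ y ∈ U, f y = φ (α * y.1 + β * y.2))
    (hx : x ∈ U) (hφ : HasDerivAt φ φ' (α * x.1 + β * x.2)) :
    deriv (fun t => f (t, x.2)) x.1 = φ' * α := by
  have hline : {t : ℝ | (t, x.2) ∈ U} ∈ nhds x.1 :=
    (hU.preimage (by fun_prop)).mem_nhds hx
  have hev : (fun t => f (t, x.2)) =ᶠ[nhds x.1] fun t => φ (α * t + β * x.2) := by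
    filter_upwards [hline] with t ht using hf _ ht
  rw [hev.deriv_eq]
  exact (hφ.comp x.1 (((hasDerivAt_id x.1).const_mul α).add_const _)).deriv.trans (by simp)

theorem deriv_snd_of_eqOn_ridge (hU : IsOpen U) (hf : ∀ y ∈ U, f y = φ (α * y.1 + β * y.2))
    (hx : x ∈ U) (hφ : HasDerivAt φ φ' (α * x.1 + β * x.2)) :
    deriv (fun t => f (x.1, t)) x.2 = φ' * β := by
  have hline : {t : ℝ | (x.1, t) ∈ U} ∈ nhds x.2 :=
    (hU.preimage (by fun_prop)).mem_nhds hx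
  have hev : (fun t => f (x.1, t)) =ᶠ[nhds x.2] fun t => φ (α * x.1 + β * t) := by
    filter_upwards [hline] with t ht using hf _ ht
  rw [hev.deriv_eq]
  exact (hφ.comp x.2 (((hasDerivAt_id x.2).const_mul β).const_add _)).deriv.trans (by simp)

end Ridge

namespace RidgeSolution

variable {a b c d t : ℝ}

noncomputable def density (a b c d t : ℝ) : ℝ :=
  (c * t + d) / (a ^ 2 + b ^ 2 * (t + 1))

noncomputable def profile (a b c d t : ℝ) : ℝ :=
  (1 / 2) * ∫ s in (-d / c)..t, √(density a b c d s)

noncomputable def slope (a b c d t : ℝ) : ℝ :=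
  (1 / 2) * √(density a b c d t)

theorem density_ode (hD : a ^ 2 + b ^ 2 * (t + 1) ≠ 0) :
    ∃ q', HasDerivAt (density a b c d) q' t ∧
      (a ^ 2 + b ^ 2 * (t + 1)) * q' + b ^ 2 * density a b c d t = c := by
  have hN : HasDerivAt (fun s => c * s + d) c t := by
    simpa using ((hasDerivAt_id t).const_mul c).add_const d
  have hDen : HasDerivAt (fun s => a ^ 2 + b ^ 2 * (s + 1)) (b ^ 2) t := by
    simpa using (((hasDerivAt_id t).add_const 1).const_mul (b ^ 2)).const_add (a ^ 2)
  refine ⟨_, hN.div hDen hD, ?_⟩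
  unfold density
  field_simp
  ring

theorem slope_ode (hN : 0 < c * t + d) (hD : 0 < a ^ 2 + b ^ 2 * (t + 1)) :
    ∃ g', HasDerivAt (slope a b c d) g' t ∧
      (a ^ 2 + b ^ 2 * (t + 1)) * (2 * slope a b c d t * g') + b ^ 2 * slope a b c d t ^ 2
        = c / 4 := by
  obtain ⟨q', hq', hode⟩ := density_ode (c := c) (d := d) hD.ne'
  have hq : 0 < density a b c d t := div_pos hN hD
  refine ⟨_, (hq'.sqrt hq.ne').const_mul (1 / 2), ?_⟩
  have hsq : √(density a b c d t) ^ 2 = density a b c d t := sq_sqrt hq.le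
  unfold slope
  field_simp
  linear_combination 4 * hode + 4 * b ^ 2 * hsq

theorem slope_zero_sq (hab : 0 < a ^ 2 + b ^ 2) (hd : 0 ≤ d) :
    slope a b c d 0 ^ 2 = d / (4 * (a ^ 2 + b ^ 2)) := by
  have hq : density a b c d 0 = d / (a ^ 2 + b ^ 2) := by simp [density]
  rw [slope, mul_pow, sq_sqrt (hq ▸ by positivity), hq]
  field_simp
  ring

theorem denominator_pos (hab : 0 < a ^ 2 + b ^ 2) (hd : 0 < d) (hdc : d < c)
    (ht : -d / c ≤ t) : 0 < a ^ 2 + b ^ 2 * (t + 1) := by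
  have hc : 0 < c := hd.trans hdc
  have ht1 : 0 < t + 1 := by
    have : -1 < -d / c := by rw [lt_div_iff₀ hc]; linarith
    linarith
  rcases (sq_nonneg b).eq_or_lt with hb | hb
  · rw [← hb] at hab ⊢; linarith
  · nlinarith [sq_nonneg a, mul_pos hb ht1]

theorem hasDerivAt_profile (hab : 0 < a ^ 2 + b ^ 2) (hd : 0 < d) (hdc : d < c)
    (ht : -d / c ≤ t) : HasDerivAt (profile a b c d) (slope a b c d t) t := by
  set S : Set ℝ := {s | 0 < a ^ 2 + b ^ 2 * (s + 1)}
  have hS : IsOpen S := isOpen_lt continuous_const (by fun_prop)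
  have hcont : ContinuousOn (fun s => √(density a b c d s)) S :=
    (continuousOn_const.mul continuousOn_id |>.add continuousOn_const).div
      (by fun_prop) (fun s hs => hs.ne') |>.sqrt
  have htS : t ∈ S := denominator_pos hab hd hdc ht
  have hseg : Set.uIcc (-d / c) t ⊆ S := by
    rw [Set.uIcc_of_le ht]
    exact fun s hs => denominator_pos hab hd hdc hs.1
  exact (intervalIntegral.integral_hasDerivAt_right ((hcont.mono hseg).intervalIntegrable)
    (hcont.stronglyMeasurableAtFilter hS t htS) (hcont.continuousAt (hS.mem_nhds htS))).const_mul _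

end RidgeSolution

theorem mongeAmpere_ridge_identity {a b c E g g' : ℝ} (hE : E ≠ 0)
    (hode : (a ^ 2 + b ^ 2 * E) * (2 * g * g') + b ^ 2 * g ^ 2 = c / 4) :
    g' * (2 * a) * (2 * a) * (g' * (2 * b) * (2 * b)) - (g' * (2 * a) * (2 * b)) ^ 2
      - a / E * (g * (2 * a)) * (g' * (2 * b) * (2 * b))
      + b * (g * (2 * b)) * (g' * (2 * b) * (2 * b))
      + 2 * b / E * (g * (2 * a)) * (g' * (2 * a) * (2 * b))
      + b ^ 2 / E * (g * (2 * b)) ^ 2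
    = b ^ 2 * c / E := by
  field_simp
  linear_combination 4 * b ^ 2 * hode

open RidgeSolution in
theorem monge_ampere_explicit_solution_general (a b c d : ℝ)
    (hdc : d < c)
    (U : Set (ℝ × ℝ)) (hU : IsOpen U) (h0 : ((0 : ℝ), (0 : ℝ)) ∈ U)
    (hcond : ∀ x ∈ U,
      0 < c * (2 * a * x.1 + 2 * b * x.2) + d ∧
      0 < a ^ 2 + b ^ 2 * ((2 * a * x.1 + 2 * b * x.2) + 1) ∧
      0 < 1 + 2 * a * x.1 + 2 * b * x.2)
    (f : ℝ × ℝ → ℝ)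
    (hf : ∀ x ∈ U, f x = (1 / 2) *
      ∫ s in (-d / c)..(2 * a * x.1 + 2 * b * x.2),
        Real.sqrt ((c * s + d) / (a ^ 2 + b ^ 2 * (s + 1))))
    (f1 f2 f11 f12 f22 : ℝ × ℝ → ℝ)
    (hf1 : ∀ x : ℝ × ℝ, f1 x = deriv (fun t => f (t, x.2)) x.1)
    (hf2 : ∀ x : ℝ × ℝ, f2 x = deriv (fun t => f (x.1, t)) x.2)
    (hf11 : ∀ x : ℝ × ℝ, f11 x = deriv (fun t => f1 (t, x.2)) x.1)
    (hf12 : ∀ x : ℝ × ℝ, f12 x = deriv (fun t => f1 (x.1, t)) x.2)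
    (hf22 : ∀ x : ℝ × ℝ, f22 x = deriv (fun t => f2 (x.1, t)) x.2) :
    (∀ x ∈ U,
      f11 x * f22 x - f12 x ^ 2
        - (a / (1 + 2 * a * x.1 + 2 * b * x.2)) * f1 x * f22 x
        + b * f2 x * f22 x
        + (2 * b / (1 + 2 * a * x.1 + 2 * b * x.2)) * f1 x * f12 x
        + (b ^ 2 / (1 + 2 * a * x.1 + 2 * b * x.2)) * f2 x ^ 2
      = b ^ 2 * c / (1 + 2 * a * x.1 + 2 * b * x.2)) ∧
    f1 (0, 0) ^ 2 + f2 (0, 0) ^ 2 < c := by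
  obtain ⟨hd, hab⟩ : 0 < d ∧ 0 < a ^ 2 + b ^ 2 := by simpa using hcond _ h0
  have hc : 0 < c := hd.trans hdc
  have hF : ∀ x ∈ U, HasDerivAt (profile a b c d) (slope a b c d (2 * a * x.1 + 2 * b * x.2))
      (2 * a * x.1 + 2 * b * x.2) := fun x hx =>
    hasDerivAt_profile hab hd hdc <| by
      rw [div_le_iff₀ hc]; linarith [(hcond x hx).1]
  have hf1U : ∀ x ∈ U, f1 x = slope a b c d (2 * a * x.1 + 2 * b * x.2) * (2 * a) :=
    fun x hx => (hf1 x).trans (deriv_fst_of_eqOn_ridge (φ := profile a b c d) hU hf hx (hF x hx))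
  have hf2U : ∀ x ∈ U, f2 x = slope a b c d (2 * a * x.1 + 2 * b * x.2) * (2 * b) :=
    fun x hx => (hf2 x).trans (deriv_snd_of_eqOn_ridge (φ := profile a b c d) hU hf hx (hF x hx))
  refine ⟨fun x hx => ?_, ?_⟩
  · obtain ⟨hN, hD, hE⟩ := hcond x hx
    obtain ⟨g', hg', hode⟩ := slope_ode hN hD
    rw [hf11, hf12, hf22, hf1U x hx, hf2U x hx,
      deriv_fst_of_eqOn_ridge hU hf1U hx (hg'.mul_const _),
      deriv_snd_of_eqOn_ridge hU hf1U hx (hg'.mul_const _),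
      deriv_snd_of_eqOn_ridge hU hf2U hx (hg'.mul_const _)]
    exact mongeAmpere_ridge_identity hE.ne' (by linear_combination hode)
  · rw [hf1U _ h0, hf2U _ h0]
    calc (slope a b c d (2 * a * 0 + 2 * b * 0) * (2 * a)) ^ 2
          + (slope a b c d (2 * a * 0 + 2 * b * 0) * (2 * b)) ^ 2
        = 4 * (a ^ 2 + b ^ 2) * slope a b c d 0 ^ 2 := by simp only [mul_zero, add_zero]; ring
      _ = d := by rw [slope_zero_sq hab hd.le]; field_simp
      _ < c := hdc

theorem monge_ampere_explicit_solution (a b c d : ℝ)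
    (hb : b ≠ 0) (hd0 : 0 < d) (hdc : d < c)
    (U : Set (ℝ × ℝ)) (hU : IsOpen U) (h0 : ((0 : ℝ), (0 : ℝ)) ∈ U)
    (hcond : ∀ x ∈ U,
      0 < c * (2 * a * x.1 + 2 * b * x.2) + d ∧
      0 < a ^ 2 + b ^ 2 * ((2 * a * x.1 + 2 * b * x.2) + 1) ∧
      0 < 1 + 2 * a * x.1 + 2 * b * x.2)
    (f : ℝ × ℝ → ℝ)
    (hf : ∀ x ∈ U, f x = (1 / 2) *
      ∫ s in (-d / c)..(2 * a * x.1 + 2 * b * x.2),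
        Real.sqrt ((c * s + d) / (a ^ 2 + b ^ 2 * (s + 1))))
    (f1 f2 f11 f12 f22 : ℝ × ℝ → ℝ)
    (hf1 : ∀ x : ℝ × ℝ, f1 x = deriv (fun t => f (t, x.2)) x.1)
    (hf2 : ∀ x : ℝ × ℝ, f2 x = deriv (fun t => f (x.1, t)) x.2)
    (hf11 : ∀ x : ℝ × ℝ, f11 x = deriv (fun t => f1 (t, x.2)) x.1)
    (hf12 : ∀ x : ℝ × ℝ, f12 x = deriv (fun t => f1 (x.1, t)) x.2)
    (hf22 : ∀ x : ℝ × ℝ, f22 x = deriv (fun t => f2 (x.1, t)) x.2) :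
    (∀ x ∈ U,
      f11 x * f22 x - f12 x ^ 2
        - (a / (1 + 2 * a * x.1 + 2 * b * x.2)) * f1 x * f22 x
        + b * f2 x * f22 x
        + (2 * b / (1 + 2 * a * x.1 + 2 * b * x.2)) * f1 x * f12 x
        + (b ^ 2 / (1 + 2 * a * x.1 + 2 * b * x.2)) * f2 x ^ 2
      = b ^ 2 * c / (1 + 2 * a * x.1 + 2 * b * x.2)) ∧
    f1 (0, 0) ^ 2 + f2 (0, 0) ^ 2 < c :=
  monge_ampere_explicit_solution_general a b c d hdc U hU h0 hcond f hf f1 f2 f11 f12 f22 hf1 hf2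
    hf11 hf12 hf22
end
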